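/- arXiv:2312.00712 — 6 statements merged into one kernel-verified Lean document; each statement's English description precedes it below -/
import Mathlib

section
/- Fix an integer N ≥ 1. For every λ ∈ ℂ with Re λ > 0, the integral defining Z[λ, N] converges absolutely, and the function λ ↦ Z[λ, N] is analytic on the open right half-plane {λ ∈ ℂ : Re λ > 0}. -/
/-!
Since `H = M Mᴴ` is Hermitian, `Tr H = ∑ |M i j|²` and `Tr H² = ∑ |H i j|²` are real and
nonnegative, so the integrand is `g(M) · exp(-λ t(M))` with `g` the Gaussian
`exp(-∑ |M i j|²)` (integrable as a product of one-variable Gaussians) and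
`t = Tr H² / (2N) ≥ 0`. Up to the constant `π^{-N²}`, `Z[·, N]` is therefore a Laplace transform
`λ ↦ ∫ g e^{-λ t}`: it converges absolutely for `Re λ ≥ 0`, and on `Re λ > ε` the
`λ`-derivative of the integrand is dominated by `|g| · sup_{t ≥ 0} t e^{-ε t} = |g| / (e ε)`, so
differentiation under the integral sign gives holomorphy, hence analyticity.
-/

open MeasureTheory Complex Matrix

/-- The quartic matrix model partition function `Z[λ, N]`:
the integral over `N × N` complex matrices `M` (with Lebesgue measure
`∏ dRe(M i j) dIm(M i j)`, realized as the volume measure on `Fin N → Fin N → ℂ`)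
of `exp(−Tr(M Mᴴ) − (λ/(2N)) Tr((M Mᴴ)²))`, normalized by `π^{−N²}`. -/
noncomputable def quarticZ (N : ℕ) (lam : ℂ) : ℂ :=
  (Real.pi : ℂ) ^ (-(N ^ 2 : ℤ)) *
    ∫ M : Fin N → Fin N → ℂ,
      Complex.exp (-(Matrix.of M * (Matrix.of M)ᴴ).trace
        - lam / (2 * N) *
          ((Matrix.of M * (Matrix.of M)ᴴ) * (Matrix.of M * (Matrix.of M)ᴴ)).trace)

section LaplaceTransform

variable {α : Type*} [MeasurableSpace α] {μ : Measure α} {g : α → ℂ} {t : α → ℝ}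

lemma norm_cexp_neg_mul_ofReal (z : ℂ) (s : ℝ) : ‖cexp (-(z * s))‖ = Real.exp (-(z.re * s)) := by
  simp [norm_exp]

lemma mul_norm_cexp_neg_mul_le {z : ℂ} {ε s : ℝ} (hε : 0 < ε) (hεz : ε ≤ z.re) (hs : 0 ≤ s) :
    s * ‖cexp (-(z * s))‖ ≤ Real.exp (-1) / ε := by
  rw [norm_cexp_neg_mul_ofReal, le_div_iff₀ hε]
  calc s * Real.exp (-(z.re * s)) * ε = ε * s * Real.exp (-(z.re * s)) := by ring
    _ ≤ ε * s * Real.exp (-(ε * s)) := by gcongr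
    _ ≤ Real.exp (-1) := Real.mul_exp_neg_le_exp_neg_one _

lemma integrable_mul_cexp_neg_mul (hg : Integrable g μ) (ht : AEMeasurable t μ)
    (ht₀ : ∀ x, 0 ≤ t x) {z : ℂ} (hz : 0 ≤ z.re) :
    Integrable (fun x ↦ g x * cexp (-(z * t x))) μ := by
  refine hg.mul_bdd (c := 1) (by fun_prop) (ae_of_all _ fun x ↦ ?_)
  rw [norm_cexp_neg_mul_ofReal, Real.exp_le_one_iff, neg_nonpos]
  exact mul_nonneg hz (ht₀ x)

lemma hasDerivAt_cexp_neg_mul_ofReal (z : ℂ) (s : ℝ) :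
    HasDerivAt (fun w : ℂ ↦ cexp (-(w * s))) (-s * cexp (-(z * s))) z := by
  simpa [mul_comm] using ((hasDerivAt_mul_const (s : ℂ)).neg (x := z)).cexp

lemma differentiableAt_integral_mul_cexp_neg_mul (hg : Integrable g μ) (ht : AEMeasurable t μ)
    (ht₀ : ∀ x, 0 ≤ t x) {z₀ : ℂ} (hz₀ : 0 < z₀.re) :
    DifferentiableAt ℂ (fun z ↦ ∫ x, g x * cexp (-(z * t x)) ∂μ) z₀ := by
  have hball : ∀ z ∈ Metric.ball z₀ (z₀.re / 2), z₀.re / 2 ≤ z.re := fun z hz ↦ by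
    have := (abs_re_le_norm (z - z₀)).trans_lt (mem_ball_iff_norm.mp hz)
    rw [sub_re, abs_lt] at this
    linarith
  have hbound : ∀ x, ∀ z ∈ Metric.ball z₀ (z₀.re / 2),
      ‖g x * (-t x * cexp (-(z * t x)))‖ ≤ ‖g x‖ * (Real.exp (-1) / (z₀.re / 2)) := by
    intro x z hz
    rw [norm_mul, norm_mul, norm_neg, norm_real, Real.norm_of_nonneg (ht₀ x)]
    exact mul_le_mul_of_nonneg_left
      (mul_norm_cexp_neg_mul_le (half_pos hz₀) (hball z hz) (ht₀ x)) (norm_nonneg _)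
  apply HasDerivAt.differentiableAt
  exact (hasDerivAt_integral_of_dominated_loc_of_deriv_le
    (F := fun z x ↦ g x * cexp (-(z * t x)))
    (F' := fun z x ↦ g x * (-t x * cexp (-(z * t x))))
    (Metric.ball_mem_nhds z₀ (half_pos hz₀))
    (.of_forall fun _ ↦ hg.aestronglyMeasurable.mul (by fun_prop))
    (integrable_mul_cexp_neg_mul hg ht ht₀ hz₀.le)
    (hg.aestronglyMeasurable.mul (by fun_prop))
    (ae_of_all _ hbound) (hg.norm.mul_const _)
    (ae_of_all _ fun x z _ ↦ (hasDerivAt_cexp_neg_mul_ofReal z (t x)).const_mul (g x))).2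

lemma analyticOnNhd_integral_mul_cexp_neg_mul (hg : Integrable g μ) (ht : AEMeasurable t μ)
    (ht₀ : ∀ x, 0 ≤ t x) :
    AnalyticOnNhd ℂ (fun z ↦ ∫ x, g x * cexp (-(z * t x)) ∂μ) {z | 0 < z.re} :=
  DifferentiableOn.analyticOnNhd
    (fun _ hz ↦ (differentiableAt_integral_mul_cexp_neg_mul hg ht ht₀ hz).differentiableWithinAt)
    (isOpen_lt continuous_const continuous_re)

end LaplaceTransform

lemma integrable_cexp_neg_sum {ι E : Type*} [Fintype ι] [MeasurableSpace E] {μ : Measure E}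
    [SigmaFinite μ] {φ : E → ℂ} (hφ : Integrable (fun x ↦ cexp (-φ x)) μ) :
    Integrable (fun x : ι → E ↦ cexp (-∑ i, φ (x i))) (Measure.pi fun _ ↦ μ) := by
  simpa only [← Finset.sum_neg_distrib, Complex.exp_sum] using Integrable.fintype_prod fun _ ↦ hφ

lemma integrable_cexp_neg_sum_sum_sq_norm (m n : Type*) [Fintype m] [Fintype n] :
    Integrable fun M : m → n → ℂ ↦ cexp (-∑ i, ∑ j, (‖M i j‖ : ℂ) ^ 2) := by
  have hℂ : Integrable fun z : ℂ ↦ cexp (-(‖z‖ : ℂ) ^ 2) := by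
    simpa using
      GaussianFourier.integrable_cexp_neg_mul_sq_norm_add (V := ℂ) (b := 1) (by simp) 0 0
  exact integrable_cexp_neg_sum (integrable_cexp_neg_sum hℂ)

lemma Matrix.trace_mul_conjTranspose_self {m n 𝕜 : Type*} [Fintype m] [Fintype n] [RCLike 𝕜]
    (A : Matrix m n 𝕜) : (A * Aᴴ).trace = ((∑ i, ∑ j, ‖A i j‖ ^ 2 : ℝ) : 𝕜) := by
  simp [Matrix.trace, Matrix.mul_apply, RCLike.mul_conj]

lemma Matrix.IsHermitian.trace_mul_self {n 𝕜 : Type*} [Fintype n] [RCLike 𝕜]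
    {A : Matrix n n 𝕜} (hA : A.IsHermitian) :
    (A * A).trace = ((∑ i, ∑ j, ‖A i j‖ ^ 2 : ℝ) : 𝕜) := by
  simpa only [hA.eq] using trace_mul_conjTranspose_self A

noncomputable def quarticPotential (N : ℕ) (M : Fin N → Fin N → ℂ) : ℝ :=
  (∑ i, ∑ j, ‖(of M * (of M)ᴴ) i j‖ ^ 2) / (2 * N)

lemma quarticPotential_nonneg (N : ℕ) (M : Fin N → Fin N → ℂ) : 0 ≤ quarticPotential N M := by
  unfold quarticPotential
  positivity

lemma continuous_quarticPotential (N : ℕ) : Continuous (quarticPotential N) := by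
  unfold quarticPotential
  fun_prop

lemma cexp_quartic_eq (N : ℕ) (lam : ℂ) (M : Fin N → Fin N → ℂ) :
    cexp (-(of M * (of M)ᴴ).trace - lam / (2 * N) * ((of M * (of M)ᴴ) * (of M * (of M)ᴴ)).trace)
      = cexp (-∑ i, ∑ j, (‖M i j‖ : ℂ) ^ 2) * cexp (-(lam * quarticPotential N M)) := by
  rw [(isHermitian_mul_conjTranspose_self (of M)).trace_mul_self, trace_mul_conjTranspose_self,
    quarticPotential, ← exp_add]
  congr 1
  simp only [of_apply, Complex.coe_algebraMap]
  push_cast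
  ring

theorem quarticZ_integrable_and_analyticOn_rightHalfPlane_general (N : ℕ) :
    (∀ lam : ℂ, 0 < lam.re →
      Integrable (fun M : Fin N → Fin N → ℂ =>
        Complex.exp (-(Matrix.of M * (Matrix.of M)ᴴ).trace
          - lam / (2 * N) *
            ((Matrix.of M * (Matrix.of M)ᴴ) * (Matrix.of M * (Matrix.of M)ᴴ)).trace))) ∧
    AnalyticOnNhd ℂ (quarticZ N) {lam : ℂ | 0 < lam.re} := by
  have hg := integrable_cexp_neg_sum_sum_sq_norm (Fin N) (Fin N)
  have ht := (continuous_quarticPotential N).measurable.aemeasurable (μ := volume)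
  simp_rw [cexp_quartic_eq]
  refine ⟨fun lam hlam ↦ integrable_mul_cexp_neg_mul hg ht (quarticPotential_nonneg N) hlam.le, ?_⟩
  have hZ : quarticZ N = fun lam ↦ (Real.pi : ℂ) ^ (-(N ^ 2 : ℤ)) *
      ∫ M : Fin N → Fin N → ℂ, cexp (-∑ i, ∑ j, (‖M i j‖ : ℂ) ^ 2) *
        cexp (-(lam * quarticPotential N M)) := by
    funext lam
    simp_rw [quarticZ, cexp_quartic_eq]
  rw [hZ]
  exact analyticOnNhd_const.mul
    (analyticOnNhd_integral_mul_cexp_neg_mul hg ht (quarticPotential_nonneg N))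

/-- For every `λ` with `Re λ > 0` the integral defining `Z[λ, N]` converges absolutely, and
`λ ↦ Z[λ, N]` is analytic on the open right half-plane. -/
theorem quarticZ_integrable_and_analyticOn_rightHalfPlane (N : ℕ) (hN : 1 ≤ N) :
    (∀ lam : ℂ, 0 < lam.re →
      Integrable (fun M : Fin N → Fin N → ℂ =>
        Complex.exp (-(Matrix.of M * (Matrix.of M)ᴴ).trace
          - lam / (2 * N) *
            ((Matrix.of M * (Matrix.of M)ᴴ) * (Matrix.of M * (Matrix.of M)ᴴ)).trace))) ∧
    AnalyticOnNhd ℂ (quarticZ N) {lam : ℂ | 0 < lam.re} :=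
  quarticZ_integrable_and_analyticOn_rightHalfPlane_general N
end

section
/- Let n ≥ 1 be an integer and let B be an n×n complex matrix whose Hermitian part (B + Bᴴ)/2 is positive definite. Then the function z ↦ exp(−⟨z, B z⟩), where ⟨z, B z⟩ = Σ_{a,b} conj(z_a) B_{ab} z_b, is absolutely integrable over ℂⁿ with respect to Lebesgue measure ∏_a dRe(z_a) dIm(z_a), det B ≠ 0, and π^{−n} ∫_{ℂⁿ} exp(−⟨z, B z⟩) dz = (det B)^{−1}. -/
/-!
Simultaneous diagonalization: if `H = (B + Bᴴ)/2` is positive definite, take `S` with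
`Sᴴ H S = 1`; then `Sᴴ B S - 1` is skew-Hermitian, hence unitarily diagonalizable, so that
`Tᴴ B T = diag(1 + i μ_j)` for some invertible `T` and real `μ_j`. The substitution `z = T w`
is a real-linear change of variables with Jacobian `|det T|²`, and it turns the integral into
a product of one-dimensional Gaussians `∫_ℂ exp(-d |w|²) = π / d` (valid since `re d = 1 > 0`).
Collecting determinants, `|det T|² · πⁿ / ∏ d_j = πⁿ / det B`.
-/

open Matrix Complex MeasureTheory ComplexOrder
open scoped Real ComplexConjugate

section ChangeOfVariables

variable {E F : Type*} [NormedAddCommGroup E] [NormedSpace ℝ E] [MeasurableSpace E]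
  [BorelSpace E] [FiniteDimensional ℝ E] (μ : Measure E) [μ.IsAddHaarMeasure]
  [NormedAddCommGroup F] {f : E →ₗ[ℝ] E}

theorem LinearMap.exists_measurableEquiv_coe_eq (hf : LinearMap.det f ≠ 0) :
    ∃ e : E ≃ᵐ E, ⇑e = f :=
  ⟨(f.equivOfDetNeZero hf).toContinuousLinearEquiv.toHomeomorph.toMeasurableEquiv, rfl⟩

theorem integrable_comp_linearMap_iff (hf : LinearMap.det f ≠ 0) (g : E → F) :
    Integrable (fun x ↦ g (f x)) μ ↔ Integrable g μ := by
  obtain ⟨e, he⟩ := f.exists_measurableEquiv_coe_eq hf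
  have hc : ENNReal.ofReal |(LinearMap.det f)⁻¹| ≠ 0 := by simpa using hf
  rw [← integrable_smul_measure hc ENNReal.ofReal_ne_top (μ := μ) (f := g),
    ← Measure.map_linearMap_addHaar_eq_smul_addHaar μ hf, ← he, integrable_map_equiv]
  rfl

theorem integral_comp_linearMap [NormedSpace ℝ F] (hf : LinearMap.det f ≠ 0) (g : E → F) :
    ∫ x, g (f x) ∂μ = |(LinearMap.det f)⁻¹| • ∫ x, g x ∂μ := by
  obtain ⟨e, he⟩ := f.exists_measurableEquiv_coe_eq hf
  rw [← ENNReal.toReal_ofReal (abs_nonneg _), ← integral_smul_measure,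
    ← Measure.map_linearMap_addHaar_eq_smul_addHaar μ hf, ← he, integral_map_equiv]

end ChangeOfVariables

section ComplexLinearChangeOfVariables

variable {ι F : Type*} [Fintype ι] [DecidableEq ι] [NormedAddCommGroup F] {M : Matrix ι ι ℂ}

theorem Matrix.det_restrictScalars_mulVecLin (M : Matrix ι ι ℂ) :
    LinearMap.det (M.mulVecLin.restrictScalars ℝ) = normSq M.det := by
  rw [LinearMap.det_restrictScalars, ← Matrix.toLin'_apply', LinearMap.det_toLin',
    Algebra.norm_complex_apply]

theorem Matrix.det_restrictScalars_mulVecLin_ne_zero (hM : M.det ≠ 0) :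
    LinearMap.det (M.mulVecLin.restrictScalars ℝ) ≠ 0 := by
  rwa [M.det_restrictScalars_mulVecLin, Ne, normSq_eq_zero]

theorem integrable_comp_mulVec_iff (hM : M.det ≠ 0) (g : (ι → ℂ) → F) :
    Integrable (fun z ↦ g (M *ᵥ z)) ↔ Integrable g :=
  integrable_comp_linearMap_iff volume (det_restrictScalars_mulVecLin_ne_zero hM) g

theorem integral_comp_mulVec [NormedSpace ℝ F] (hM : M.det ≠ 0) (g : (ι → ℂ) → F) :
    ∫ z, g (M *ᵥ z) = (normSq M.det)⁻¹ • ∫ z, g z := by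
  rw [← abs_of_nonneg (inv_nonneg.2 (normSq_nonneg M.det)),
    ← M.det_restrictScalars_mulVecLin]
  exact integral_comp_linearMap volume (det_restrictScalars_mulVecLin_ne_zero hM) g

end ComplexLinearChangeOfVariables

section Gaussian

theorem integrable_cexp_neg_mul_normSq {c : ℂ} (hc : 0 < c.re) :
    Integrable fun z : ℂ ↦ cexp (-(c * normSq z)) := by
  simpa [normSq_eq_norm_sq] using GaussianFourier.integrable_cexp_neg_mul_sq_norm_add hc 0 (0 : ℂ)

theorem integral_cexp_neg_mul_normSq {c : ℂ} (hc : 0 < c.re) :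
    ∫ z : ℂ, cexp (-(c * normSq z)) = π / c := by
  simpa [normSq_eq_norm_sq] using GaussianFourier.integral_cexp_neg_mul_sq_norm (V := ℂ) hc

variable {ι : Type*} [Fintype ι] {d : ι → ℂ}

theorem integrable_cexp_neg_sum_mul_normSq (hd : ∀ i, 0 < (d i).re) :
    Integrable fun z : ι → ℂ ↦ cexp (-∑ i, d i * normSq (z i)) := by
  simp_rw [← Finset.sum_neg_distrib, Complex.exp_sum]
  exact Integrable.fintype_prod fun i ↦ integrable_cexp_neg_mul_normSq (hd i)

theorem integral_cexp_neg_sum_mul_normSq (hd : ∀ i, 0 < (d i).re) :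
    ∫ z : ι → ℂ, cexp (-∑ i, d i * normSq (z i)) = ∏ i, π / d i := by
  simp_rw [← Finset.sum_neg_distrib, Complex.exp_sum]
  rw [integral_fintype_prod_volume_eq_prod fun i (z : ℂ) ↦ cexp (-(d i * normSq z))]
  exact Finset.prod_congr rfl fun i _ ↦ integral_cexp_neg_mul_normSq (hd i)

end Gaussian

namespace Matrix

variable {ι 𝕜 : Type*} [Fintype ι] [DecidableEq ι] [RCLike 𝕜]

theorem IsHermitian.conjTranspose_eigenvectorUnitary_mul_mul {A : Matrix ι ι 𝕜}
    (hA : A.IsHermitian) :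
    (hA.eigenvectorUnitary : Matrix ι ι 𝕜)ᴴ * A * (hA.eigenvectorUnitary : Matrix ι ι 𝕜)
      = diagonal (RCLike.ofReal ∘ hA.eigenvalues) := by
  rw [← star_eq_conjTranspose]
  simpa using hA.conjStarAlgAut_star_eigenvectorUnitary

theorem exists_conjTranspose_mul_mul_eq_diagonal_of_add_conjTranspose_eq_two
    {C : Matrix ι ι ℂ} (hC : C + Cᴴ = 2) :
    ∃ (U : Matrix ι ι ℂ) (μ : ι → ℝ), Uᴴ * C * U = diagonal fun j ↦ 1 + I * μ j := by
  set K : Matrix ι ι ℂ := (-I) • (C - 1)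
  have hK : K.IsHermitian := by
    have hCH : Cᴴ = 2 - C := eq_sub_of_add_eq' hC
    simp only [IsHermitian, K, conjTranspose_smul, conjTranspose_sub, conjTranspose_one, hCH,
      star_neg, star_def, conj_I]
    rw [← one_add_one_eq_two]
    module
  have hCK : C = 1 + I • K := by simp [K, smul_smul]
  set U : Matrix ι ι ℂ := (hK.eigenvectorUnitary : Matrix ι ι ℂ)
  have hUU : Uᴴ * U = 1 := by
    rw [← star_eq_conjTranspose]
    exact Unitary.coe_star_mul_self hK.eigenvectorUnitary
  refine ⟨U, hK.eigenvalues, ?_⟩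
  rw [hCK, Matrix.mul_add, Matrix.add_mul, Matrix.mul_one, hUU, Matrix.mul_smul,
    Matrix.smul_mul, hK.conjTranspose_eigenvectorUnitary_mul_mul]
  ext i j
  by_cases h : i = j <;> simp [h]

theorem PosDef.exists_conjTranspose_mul_mul_eq_one {A : Matrix ι ι 𝕜} (hA : A.PosDef) :
    ∃ T : Matrix ι ι 𝕜, Tᴴ * A * T = 1 := by
  set U : Matrix ι ι 𝕜 := (hA.1.eigenvectorUnitary : Matrix ι ι 𝕜)
  set s : ι → 𝕜 := fun i ↦ ((√(hA.1.eigenvalues i))⁻¹ : ℝ)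
  refine ⟨U * diagonal s, ?_⟩
  have hs : star s = s := funext fun i ↦ by simp [s]
  calc (U * diagonal s)ᴴ * A * (U * diagonal s)
      = diagonal s * (Uᴴ * A * U) * diagonal s := by
        simp only [conjTranspose_mul, diagonal_conjTranspose, hs, Matrix.mul_assoc]
    _ = 1 := by
        rw [hA.1.conjTranspose_eigenvectorUnitary_mul_mul, diagonal_mul_diagonal,
          diagonal_mul_diagonal, ← diagonal_one]
        congr 1
        funext i
        have hsq : √(hA.1.eigenvalues i) ^ 2 = hA.1.eigenvalues i :=
          Real.sq_sqrt (hA.eigenvalues_pos i).le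
        have hne : √(hA.1.eigenvalues i) ≠ 0 := (Real.sqrt_pos.2 (hA.eigenvalues_pos i)).ne'
        simp only [s, Function.comp_apply]
        rw [← RCLike.ofReal_mul, ← RCLike.ofReal_mul, ← RCLike.ofReal_one]
        congr 1
        nth_rw 2 [← hsq]
        field_simp

theorem exists_conjTranspose_mul_mul_eq_diagonal_of_posDef_hermitianPart
    {B : Matrix ι ι ℂ} (hB : ((1 / 2 : ℂ) • (B + Bᴴ)).PosDef) :
    ∃ (T : Matrix ι ι ℂ) (μ : ι → ℝ), Tᴴ * B * T = diagonal fun j ↦ 1 + I * μ j := by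
  obtain ⟨S, hS⟩ := hB.exists_conjTranspose_mul_mul_eq_one
  have hC : Sᴴ * B * S + (Sᴴ * B * S)ᴴ = 2 := calc
    _ = Sᴴ * (B + Bᴴ) * S := by
      simp only [conjTranspose_mul, conjTranspose_conjTranspose, Matrix.mul_add, Matrix.add_mul,
        Matrix.mul_assoc]
    _ = (2 : ℂ) • (Sᴴ * ((1 / 2 : ℂ) • (B + Bᴴ)) * S) := by
      rw [Matrix.mul_smul, Matrix.smul_mul, smul_smul]
      norm_num
    _ = 2 := by rw [hS, two_smul, one_add_one_eq_two]
  obtain ⟨U, μ, hU⟩ := exists_conjTranspose_mul_mul_eq_diagonal_of_add_conjTranspose_eq_two hC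
  exact ⟨S * U, μ, by simpa [Matrix.mul_assoc] using hU⟩

end Matrix

section QuadraticForm

variable {ι : Type*} [Fintype ι]

theorem sum_sum_conj_mul_mul_eq_star_dotProduct_mulVec (B : Matrix ι ι ℂ) (z : ι → ℂ) :
    ∑ a, ∑ b, conj (z a) * B a b * z b = star z ⬝ᵥ (B *ᵥ z) := by
  simp [dotProduct, mulVec, Finset.mul_sum, mul_assoc]

theorem star_mulVec_dotProduct_mulVec_mulVec (T B : Matrix ι ι ℂ) (w : ι → ℂ) :
    star (T *ᵥ w) ⬝ᵥ (B *ᵥ (T *ᵥ w)) = star w ⬝ᵥ ((Tᴴ * B * T) *ᵥ w) := by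
  rw [star_mulVec, mulVec_mulVec, ← dotProduct_mulVec, mulVec_mulVec, Matrix.mul_assoc]

theorem star_dotProduct_diagonal_mulVec [DecidableEq ι] (d w : ι → ℂ) :
    star w ⬝ᵥ (diagonal d *ᵥ w) = ∑ i, d i * normSq (w i) := by
  refine Finset.sum_congr rfl fun i _ ↦ ?_
  rw [mulVec_diagonal, Pi.star_apply, star_def, normSq_eq_conj_mul_self]
  ring

end QuadraticForm

theorem integrable_and_det_ne_zero_and_integral_cexp_neg_star_dotProduct_mulVec
    {ι : Type*} [Fintype ι] [DecidableEq ι] {B : Matrix ι ι ℂ}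
    (hB : ((1 / 2 : ℂ) • (B + Bᴴ)).PosDef) :
    Integrable (fun z : ι → ℂ ↦ cexp (-(star z ⬝ᵥ (B *ᵥ z)))) ∧ B.det ≠ 0 ∧
      ∫ z : ι → ℂ, cexp (-(star z ⬝ᵥ (B *ᵥ z))) = π ^ Fintype.card ι / B.det := by
  obtain ⟨T, μ, hT⟩ := exists_conjTranspose_mul_mul_eq_diagonal_of_posDef_hermitianPart hB
  set d : ι → ℂ := fun j ↦ 1 + I * μ j
  have hd : ∀ j, 0 < (d j).re := fun j ↦ by simp [d]
  have hd0 : ∏ j, d j ≠ 0 := Finset.prod_ne_zero_iff.2 fun j _ hj ↦ by simpa [hj] using hd j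
  have hdet : conj T.det * B.det * T.det = ∏ j, d j := by
    simpa [det_conjTranspose] using congrArg det hT
  have hT0 : T.det ≠ 0 := fun h ↦ hd0 (by rw [← hdet, h, mul_zero])
  have hB0 : B.det ≠ 0 := fun h ↦ hd0 (by rw [← hdet, h, mul_zero, zero_mul])
  have hcomp : ∀ w, cexp (-(star (T *ᵥ w) ⬝ᵥ (B *ᵥ (T *ᵥ w))))
      = cexp (-∑ i, d i * normSq (w i)) := fun w ↦ by
    rw [star_mulVec_dotProduct_mulVec_mulVec, hT, star_dotProduct_diagonal_mulVec]
  refine ⟨?_, hB0, ?_⟩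
  · rw [← integrable_comp_mulVec_iff hT0]
    simpa only [hcomp] using integrable_cexp_neg_sum_mul_normSq hd
  · have h := integral_comp_mulVec hT0 fun z ↦ cexp (-(star z ⬝ᵥ (B *ᵥ z)))
    simp only [hcomp, integral_cexp_neg_sum_mul_normSq hd] at h
    rw [Finset.prod_div_distrib, Finset.prod_const, Finset.card_univ, ← hdet, real_smul,
      ofReal_inv, normSq_eq_conj_mul_self] at h
    have hconj : conj T.det ≠ 0 := (map_ne_zero _).2 hT0
    field_simp at h ⊢
    linear_combination -h

theorem complex_gaussian_integral_general (n : ℕ) (B : Matrix (Fin n) (Fin n) ℂ)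
    (hB : ((1 / 2 : ℂ) • (B + Bᴴ)).PosDef) :
    Integrable (fun z : Fin n → ℂ =>
      Complex.exp (-(∑ a, ∑ b, (starRingEnd ℂ) (z a) * B a b * z b))) ∧
    B.det ≠ 0 ∧
    (Real.pi : ℂ) ^ (-(n : ℤ)) *
        ∫ z : Fin n → ℂ,
          Complex.exp (-(∑ a, ∑ b, (starRingEnd ℂ) (z a) * B a b * z b))
      = (B.det)⁻¹ := by
  obtain ⟨hint, hdet, hval⟩ :=
    integrable_and_det_ne_zero_and_integral_cexp_neg_star_dotProduct_mulVec hB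
  simp_rw [sum_sum_conj_mul_mul_eq_star_dotProduct_mulVec]
  refine ⟨hint, hdet, ?_⟩
  rw [hval, Fintype.card_fin, _root_.zpow_neg, zpow_natCast]
  field_simp

/-- Complex Gaussian integral: if the Hermitian part `(B + Bᴴ)/2` of an `n × n` complex
matrix `B` is positive definite, then `z ↦ exp(−⟨z, Bz⟩)` (with
`⟨z, Bz⟩ = Σ_{a,b} conj(z_a) B_{ab} z_b`) is absolutely integrable over `ℂⁿ` with respect
to Lebesgue measure, `det B ≠ 0`, and `π^{−n} ∫ exp(−⟨z, Bz⟩) dz = (det B)⁻¹`. -/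
theorem complex_gaussian_integral (n : ℕ) (hn : 1 ≤ n) (B : Matrix (Fin n) (Fin n) ℂ)
    (hB : ((1 / 2 : ℂ) • (B + Bᴴ)).PosDef) :
    Integrable (fun z : Fin n → ℂ =>
      Complex.exp (-(∑ a, ∑ b, (starRingEnd ℂ) (z a) * B a b * z b))) ∧
    B.det ≠ 0 ∧
    (Real.pi : ℂ) ^ (-(n : ℤ)) *
        ∫ z : Fin n → ℂ,
          Complex.exp (-(∑ a, ∑ b, (starRingEnd ℂ) (z a) * B a b * z b))
      = (B.det)⁻¹ :=
  complex_gaussian_integral_general n B hB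
end

section
/- Let μ ∈ ℂ with μ ≠ 0, let ψ ∈ (−π/2, π/2), let x > 0 be real, and set a = x·μ·e^{iψ}. Define x₁ = (cos ψ + √(cos²ψ + 8|μ|²·cos ψ))/(2|μ|·cos ψ). If x ≥ max{x₁, 1/|μ|}, then |μ/a|·(1/cos ψ) + |(1−a)/μ| ≤ (3/2)·|(1−a)/μ|; equivalently, 1/(x·cos ψ) + |1 − a|/|μ| ≤ (3/2)·|1 − a|/|μ|. -/
open Complex

/-!
With `m = ‖μ‖`, `c = cos ψ` and `‖a‖ = x m`, the claim reduces to `2m ≤ x c ‖1 - a‖`.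
The reverse triangle inequality gives `‖1 - a‖ ≥ x m - 1 ≥ 0`, so it suffices that
`m c x² - c x - 2m ≥ 0`, and `x₁` is exactly the larger root of this quadratic.
-/

theorem quadratic_nonneg_of_root_le {a b c x : ℝ} (ha : 0 < a) (hD : 0 ≤ discrim a b c)
    (hx : (-b + √(discrim a b c)) / (2 * a) ≤ x) : 0 ≤ a * x * x + b * x + c := by
  rw [div_le_iff₀ (by positivity)] at hx
  have hsq : √(discrim a b c) ^ 2 ≤ (2 * a * x + b) ^ 2 :=
    pow_le_pow_left₀ (Real.sqrt_nonneg _) (by linarith) 2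
  rw [Real.sq_sqrt hD, discrim] at hsq
  refine nonneg_of_mul_nonneg_right (a := 4 * a) ?_ (by positivity)
  linarith

theorem two_mul_le_mul_mul_sub_one {m c x : ℝ} (hm : 0 < m) (hc : 0 < c)
    (hx : (c + √(c ^ 2 + 8 * m ^ 2 * c)) / (2 * m * c) ≤ x) :
    2 * m ≤ c * x * (x * m - 1) := by
  have hD : discrim (m * c) (-c) (-(2 * m)) = c ^ 2 + 8 * m ^ 2 * c := by rw [discrim]; ring
  have := quadratic_nonneg_of_root_le (x := x) (mul_pos hm hc) (by rw [hD]; positivity)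
    (by rwa [hD, neg_neg, ← mul_assoc])
  linarith

theorem norm_ofReal_mul_mul_exp_mul_I {x : ℝ} (hx : 0 ≤ x) (μ : ℂ) (ψ : ℝ) :
    ‖(x : ℂ) * μ * exp (ψ * I)‖ = x * ‖μ‖ := by
  rw [norm_mul, norm_mul, norm_exp_ofReal_mul_I, norm_real, Real.norm_of_nonneg hx, mul_one]

/-- For `μ ≠ 0`, `ψ ∈ (−π/2, π/2)`, `x > 0` and `a = x μ e^{iψ}`: if
`x ≥ max{x₁, 1/|μ|}` with `x₁ = (cos ψ + √(cos²ψ + 8|μ|² cos ψ))/(2|μ| cos ψ)`, then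
`|μ/a|·(1/cos ψ) + |(1−a)/μ| ≤ (3/2)·|(1−a)/μ|`. -/
theorem leaf_corner_bound (μ : ℂ) (hμ : μ ≠ 0)
    (ψ : ℝ) (hψ : ψ ∈ Set.Ioo (-(Real.pi / 2)) (Real.pi / 2))
    (x : ℝ) (hx : 0 < x) (a : ℂ) (ha : a = (x : ℂ) * μ * Complex.exp ((ψ : ℂ) * Complex.I))
    (x₁ : ℝ)
    (hx₁ : x₁ = (Real.cos ψ + Real.sqrt (Real.cos ψ ^ 2 + 8 * ‖μ‖ ^ 2 * Real.cos ψ))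
        / (2 * ‖μ‖ * Real.cos ψ))
    (hxge : max x₁ (1 / ‖μ‖) ≤ x) :
    ‖μ / a‖ * (1 / Real.cos ψ) + ‖(1 - a) / μ‖
      ≤ (3 / 2) * ‖(1 - a) / μ‖ := by
  have hc : 0 < Real.cos ψ := Real.cos_pos_of_mem_Ioo hψ
  have hm : 0 < ‖μ‖ := norm_pos_iff.mpr hμ
  have hxm : 1 ≤ x * ‖μ‖ := (div_le_iff₀ hm).mp ((le_max_right _ _).trans hxge)
  have hna : ‖a‖ = x * ‖μ‖ := ha ▸ norm_ofReal_mul_mul_exp_mul_I hx.le μ ψ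
  have hreverse : x * ‖μ‖ - 1 ≤ ‖1 - a‖ := by
    simpa [hna, norm_sub_rev] using norm_sub_norm_le a 1
  have hkey : 2 * ‖μ‖ ≤ x * Real.cos ψ * ‖1 - a‖ :=
    calc 2 * ‖μ‖ ≤ Real.cos ψ * x * (x * ‖μ‖ - 1) :=
          two_mul_le_mul_mul_sub_one hm hc (hx₁ ▸ (le_max_left _ _).trans hxge)
      _ ≤ x * Real.cos ψ * ‖1 - a‖ := by rw [mul_comm (Real.cos ψ)]; gcongr
  rw [norm_div, norm_div, hna, div_mul_cancel_right₀ hm.ne']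
  field_simp
  linarith
end

section
/- For all integers m ≥ j ≥ 1, the number of surjective functions from Fin m onto Fin j is at most j! · C(m−1, j−1) · j^{m−j}, where C denotes the binomial coefficient. -/
/-!
A surjection `f : α → β` from a finite linear order is determined by three pieces of data: the set
`S` of positions where a value occurs for the first time, the values of `f` on `S`, and the values
of `f` off `S`. Surjectivity forces `f` to map `S` bijectively onto `β`, so `#S = #β`, and `S`
always contains the least element of `α`. Hence there are at most `C(#α - 1, #β - 1)` choices of
`S`, `#β!` choices of `f` on `S` and `#β ^ (#α - #β)` choices of `f` off `S`.
-/

open Finset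

namespace Function

variable {α β : Type*} [LinearOrder α] [Fintype α] [DecidableEq β]

def firstOccurrences (f : α → β) : Finset α := {a | ∀ b < a, f b ≠ f a}

variable {f : α → β}

theorem mem_firstOccurrences {a : α} : a ∈ firstOccurrences f ↔ ∀ b < a, f b ≠ f a := by
  simp [firstOccurrences]

theorem bot_mem_firstOccurrences [OrderBot α] : ⊥ ∈ firstOccurrences f :=
  mem_firstOccurrences.2 fun _ hb => absurd hb not_lt_bot

theorem injOn_firstOccurrences : Set.InjOn f (firstOccurrences f) := by
  intro a ha b hb hab
  rw [mem_coe, mem_firstOccurrences] at ha hb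
  rcases lt_trichotomy a b with h | h | h
  · exact absurd hab (hb a h)
  · exact h
  · exact absurd hab.symm (ha b h)

theorem image_firstOccurrences : (firstOccurrences f).image f = univ.image f := by
  refine (image_subset_image (subset_univ _)).antisymm fun y hy => ?_
  obtain ⟨a, -, rfl⟩ := mem_image.1 hy
  have hne : ({b | f b = f a} : Finset α).Nonempty := ⟨a, by simp⟩
  have hmin := min'_mem _ hne
  simp only [mem_filter, mem_univ, true_and] at hmin
  refine mem_image.2 ⟨_, mem_firstOccurrences.2 fun b hb hfb => ?_, hmin⟩
  exact (min'_le _ b (by simp [hfb, hmin])).not_gt hb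

theorem card_firstOccurrences_of_surjective [Fintype β] (hf : Surjective f) :
    #(firstOccurrences f) = Fintype.card β := by
  rw [← card_image_of_injOn injOn_firstOccurrences, image_firstOccurrences,
    image_univ_of_surjective hf, card_univ]

variable [Fintype β]

theorem card_filter_firstOccurrences_eq_le (S : Finset α) :
    #({f | firstOccurrences f = S} : Finset (α → β))
      ≤ (Fintype.card β).descFactorial #S * Fintype.card β ^ (Fintype.card α - #S) := by
  let restrictions : {f : α → β // firstOccurrences f = S} → (S ↪ β) × ((Sᶜ : Finset α) → β) :=
    fun f => (⟨fun a => f.1 a, fun a b hab =>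
        Subtype.ext (injOn_firstOccurrences (by simp [f.2]) (by simp [f.2]) hab)⟩,
      fun a => f.1 a)
  have h_inj : Injective restrictions := by
    rintro ⟨f, _⟩ ⟨g, _⟩ hfg
    simp only [restrictions, Prod.mk.injEq] at hfg
    refine Subtype.ext (funext fun a => ?_)
    by_cases ha : a ∈ S
    · exact congrArg (· ⟨a, ha⟩) hfg.1
    · exact congrFun hfg.2 ⟨a, mem_compl.2 ha⟩
  rw [← Fintype.card_subtype]
  refine (Fintype.card_le_of_injective _ h_inj).trans_eq ?_
  rw [Fintype.card_prod, Fintype.card_embedding_eq, Fintype.card_fun, Fintype.card_coe,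
    Fintype.card_coe, card_compl]

theorem card_filter_erase_firstOccurrences_eq_le [OrderBot α] (hβ : 0 < Fintype.card β)
    {T : Finset α} (hT : T ∈ powersetCard (Fintype.card β - 1) (univ.erase ⊥)) :
    #({f | (firstOccurrences f).erase ⊥ = T} : Finset (α → β))
      ≤ (Fintype.card β).factorial * Fintype.card β ^ (Fintype.card α - Fintype.card β) := by
  obtain ⟨hTsub, hTcard⟩ := mem_powersetCard.1 hT
  have h_insert : #(insert ⊥ T) = Fintype.card β := by
    rw [card_insert_of_notMem fun h => (mem_erase.1 (hTsub h)).1 rfl, hTcard]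
    omega
  calc _ ≤ #({f | firstOccurrences f = insert ⊥ T} : Finset (α → β)) := by
        refine card_le_card fun f hf => ?_
        simp only [mem_filter, mem_univ, true_and] at hf ⊢
        rw [← hf, insert_erase bot_mem_firstOccurrences]
    _ ≤ _ := by
        simpa only [h_insert, Nat.descFactorial_self] using
          card_filter_firstOccurrences_eq_le (β := β) (insert ⊥ T)

theorem card_filter_surjective_le [OrderBot α] (hβ : 0 < Fintype.card β) :
    #({f | Surjective f} : Finset (α → β))
      ≤ (Fintype.card β).factorial * (Fintype.card α - 1).choose (Fintype.card β - 1)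
        * Fintype.card β ^ (Fintype.card α - Fintype.card β) := by
  have h_maps : Set.MapsTo (fun f : α → β => (firstOccurrences f).erase ⊥)
      ↑({f | Surjective f} : Finset (α → β))
      ↑(powersetCard (Fintype.card β - 1) (univ.erase (⊥ : α))) := by
    intro f hf
    rw [mem_coe, mem_filter] at hf
    rw [mem_coe, mem_powersetCard, card_erase_of_mem bot_mem_firstOccurrences,
      card_firstOccurrences_of_surjective hf.2]
    exact ⟨erase_subset_erase _ (subset_univ _), rfl⟩
  rw [card_eq_sum_card_fiberwise h_maps]
  refine (sum_le_sum fun T hT => (card_le_card (filter_subset_filter _ (filter_subset _ _))).trans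
    (card_filter_erase_firstOccurrences_eq_le hβ hT)).trans_eq ?_
  rw [sum_const, card_powersetCard, card_erase_of_mem (mem_univ _), card_univ, smul_eq_mul]
  ring

end Function

/-- For `m ≥ j ≥ 1`, the number of surjections `Fin m ↠ Fin j` is at most
`j! · C(m−1, j−1) · j^{m−j}`. -/
theorem surjection_count_upper_bound (m j : ℕ) (hj : 1 ≤ j) (hm : j ≤ m) :
    Nat.card {f : Fin m → Fin j // Function.Surjective f}
      ≤ j.factorial * (m - 1).choose (j - 1) * j ^ (m - j) := by
  have : NeZero m := ⟨by omega⟩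
  rw [Nat.card_eq_fintype_card, Fintype.card_subtype]
  simpa only [Fintype.card_fin] using
    Function.card_filter_surjective_le (α := Fin m) (β := Fin j) (by rwa [Fintype.card_fin])
end

section
/- Let n ≥ 3 and 2 ≤ k ≤ n − 1 be integers. The number of trees on Fin n having exactly k leaves is at most n! · (e^k / k^k) · 2^{n−3} · (n − k)^k, where e is Euler's number. -/
/-- The number of trees on `Fin n` (connected acyclic simple graphs) having exactly `k`
leaves (vertices of degree `1`, i.e. with exactly one neighbor). -/
noncomputable def numTreesWithLeaves (n k : ℕ) : ℕ :=
  Nat.card {G : SimpleGraph (Fin n) //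
    G.IsTree ∧ Nat.card {v : Fin n // Nat.card (G.neighborSet v) = 1} = k}

/-!
Root a tree at a non-leaf `r` and send every other vertex to its parent, the neighbour one step
closer to `r`. The parent map determines the tree, and its image is exactly the set of non-leaves,
so a tree with leaf set `L` is encoded by a surjection from the `n - 1` vertices other than `r`
onto the `m = n - k` non-leaves. A surjection onto an `m`-set is injective on some `m`-subset of
its domain (the image of a section), so there are at most `C(n - 1, m) · m! · m ^ (k - 1)` of
them. Summing over the `C(n, k)` leaf sets and using `C(n - 1, m) ≤ 2 ^ (n - 2) · m` and
`2 k ^ k ≤ k! e ^ k` gives the bound.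
-/

open Finset Nat

section Surjections

variable {α β : Type*} [Finite α] [Finite β]

theorem card_injOn_le (S : Finset α) :
    Nat.card {f : α → β // Set.InjOn f S} ≤
      (Nat.card β).descFactorial #S * Nat.card β ^ (Nat.card α - #S) := by
  classical
  have := Fintype.ofFinite α
  have := Fintype.ofFinite β
  let F : {f : α → β // Set.InjOn f S} → (S ↪ β) × ({a // a ∉ S} → β) := fun f =>
    (⟨fun a => f.1 a, fun a b h => Subtype.ext (f.2 a.2 b.2 h)⟩, fun a => f.1 a)
  have hF : Function.Injective F := by
    intro f g h
    ext a
    by_cases ha : a ∈ S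
    · exact DFunLike.congr_fun (congrArg Prod.fst h) ⟨a, ha⟩
    · exact congrFun (congrArg Prod.snd h) ⟨a, ha⟩
  refine (Nat.card_le_card_of_injective F hF).trans_eq ?_
  simp [Nat.card_eq_fintype_card, Fintype.card_embedding_eq, Fintype.card_subtype_compl]

theorem card_surjective_le :
    Nat.card {f : α → β // Function.Surjective f} ≤
      (Nat.card α).choose (Nat.card β) *
        ((Nat.card β)! * Nat.card β ^ (Nat.card α - Nat.card β)) := by
  classical
  have := Fintype.ofFinite α
  have := Fintype.ofFinite β
  let F : {f : α → β // Function.Surjective f} →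
      Σ S : {S : Finset α // #S = Nat.card β}, {f : α → β // Set.InjOn f S} := fun f =>
    ⟨⟨univ.image (Function.surjInv f.2), by
        rw [card_image_of_injective _ (Function.injective_surjInv f.2), Finset.card_univ,
          Nat.card_eq_fintype_card]⟩,
      ⟨f.1, by
        simp only [coe_image, coe_univ, Set.image_univ]
        rintro _ ⟨b, rfl⟩ _ ⟨b', rfl⟩ h
        rw [Function.surjInv_eq f.2, Function.surjInv_eq f.2] at h
        rw [h]⟩⟩
  have hF : Function.Injective F := fun f g h => Subtype.ext (congrArg (fun x => x.2.1) h)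
  refine (Nat.card_le_card_of_injective F hF).trans ?_
  rw [Nat.card_sigma]
  calc ∑ S : {S : Finset α // #S = Nat.card β}, Nat.card {f : α → β // Set.InjOn f S}
      ≤ ∑ _S : {S : Finset α // #S = Nat.card β},
          (Nat.card β)! * Nat.card β ^ (Nat.card α - Nat.card β) := by
        refine sum_le_sum fun S _ => ?_
        simpa only [S.2, Nat.descFactorial_self] using card_injOn_le (β := β) S.1
    _ = _ := by
        rw [sum_const, Finset.card_univ, Fintype.card_finset_len, smul_eq_mul,
          Nat.card_eq_fintype_card (α := α)]

end Surjections

namespace SimpleGraph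

variable {V : Type*} (G : SimpleGraph V)

open Classical in
noncomputable def parent (r v : V) : V :=
  if h : ∃ w, G.Adj v w ∧ G.dist r w + 1 = G.dist r v then h.choose else v

variable {G} {r : V}

theorem Connected.exists_adj_dist_add_one (hG : G.Connected) {v : V} (hv : v ≠ r) :
    ∃ w, G.Adj v w ∧ G.dist r w + 1 = G.dist r v := by
  obtain ⟨p, -, hp⟩ := hG.exists_path_of_dist v r
  have hnil : ¬p.Nil := Walk.not_nil_of_ne hv
  have hadj : G.Adj v p.snd := Walk.adj_snd hnil
  refine ⟨p.snd, hadj, le_antisymm ?_ ?_⟩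
  · rw [dist_comm, dist_comm (u := r), ← hp, ← p.length_tail_add_one hnil]
    exact Nat.add_le_add_right (dist_le _) 1
  · calc G.dist r v ≤ G.dist r p.snd + G.dist p.snd v := hG.dist_triangle
      _ = G.dist r p.snd + 1 := by rw [dist_eq_one_iff_adj.mpr hadj.symm]

theorem Connected.parent_spec (hG : G.Connected) {v : V} (hv : v ≠ r) :
    G.Adj v (G.parent r v) ∧ G.dist r (G.parent r v) + 1 = G.dist r v := by
  have h := hG.exists_adj_dist_add_one hv
  rw [parent, dif_pos h]
  exact h.choose_spec

theorem Connected.parent_parent_ne (hG : G.Connected) {c : V} (hc : c ≠ r)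
    (hpc : G.parent r c ≠ r) : G.parent r (G.parent r c) ≠ c := by
  intro h
  have h₁ := (hG.parent_spec hc).2
  have h₂ := (hG.parent_spec hpc).2
  rw [h] at h₂
  omega

theorem IsTree.eq_of_adj_of_dist_add_one (hG : G.IsTree) {u w₁ w₂ : V} (h₁ : G.Adj u w₁)
    (h₂ : G.Adj u w₂) (hd₁ : G.dist r w₁ + 1 = G.dist r u)
    (hd₂ : G.dist r w₂ + 1 = G.dist r u) : w₁ = w₂ := by
  classical
  have key : ∀ w (h : G.Adj u w), G.dist r w + 1 = G.dist r u →
      ∃ q : G.Walk w r, (Walk.cons h q).IsPath := by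
    intro w h hd
    obtain ⟨q, hq, hql⟩ := hG.connected.exists_path_of_dist w r
    refine ⟨q, (Walk.cons_isPath_iff h q).mpr ⟨hq, fun hu => ?_⟩⟩
    have := (dist_le (q.dropUntil u hu)).trans (q.length_dropUntil_le_length hu)
    rw [hql, dist_comm, dist_comm (u := w)] at this
    omega
  obtain ⟨q₁, hq₁⟩ := key w₁ h₁ hd₁
  obtain ⟨q₂, hq₂⟩ := key w₂ h₂ hd₂
  simpa using congrArg Walk.snd ((hG.existsUnique_path u r).unique hq₁ hq₂)

theorem IsTree.parent_eq_of_adj (hG : G.IsTree) {u w : V} (h : G.Adj u w)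
    (hd : G.dist r w + 1 = G.dist r u) : G.parent r u = w := by
  have hu : u ≠ r := by rintro rfl; simp at hd
  have hp := hG.connected.parent_spec hu
  exact hG.eq_of_adj_of_dist_add_one hp.1 h hp.2 hd

theorem IsTree.adj_iff_parent (hG : G.IsTree) {u v : V} :
    G.Adj u v ↔ (u ≠ r ∧ G.parent r u = v) ∨ (v ≠ r ∧ G.parent r v = u) := by
  constructor
  · intro h
    rcases hG.dist_eq_dist_add_one_of_adj r h with hd | hd
    · exact Or.inl ⟨by rintro rfl; simp at hd, hG.parent_eq_of_adj h hd.symm⟩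
    · exact Or.inr ⟨by rintro rfl; simp at hd, hG.parent_eq_of_adj h.symm hd.symm⟩
  · rintro (⟨hu, rfl⟩ | ⟨hv, rfl⟩)
    · exact (hG.connected.parent_spec hu).1
    · exact (hG.connected.parent_spec hv).1.symm

theorem IsTree.ext_of_parent {H : SimpleGraph V} (hG : G.IsTree) (hH : H.IsTree)
    (h : ∀ v, v ≠ r → G.parent r v = H.parent r v) : G = H := by
  ext u v
  rw [hG.adj_iff_parent (r := r), hH.adj_iff_parent (r := r)]
  exact or_congr (and_congr_right fun hu => by rw [h u hu])
    (and_congr_right fun hv => by rw [h v hv])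

theorem IsTree.range_parent [Nontrivial V] (hG : G.IsTree)
    (hr : Nat.card (G.neighborSet r) ≠ 1) :
    Set.range (fun v : {v // v ≠ r} => G.parent r v) =
      {v | Nat.card (G.neighborSet v) ≠ 1} := by
  ext w
  simp only [Set.mem_range, Subtype.exists, Set.mem_ofPred_eq, Nat.card_coe_set_eq, ne_eq,
    Set.ncard_eq_one, not_exists]
  constructor
  · rintro ⟨c, hc, rfl⟩ a ha
    by_cases hpc : G.parent r c = r
    · rw [hpc] at ha
      exact hr (Set.ncard_eq_one.mpr ⟨a, ha⟩)
    have hc' : c ∈ G.neighborSet (G.parent r c) := (hG.connected.parent_spec hc).1.symm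
    have hp : G.parent r (G.parent r c) ∈ G.neighborSet (G.parent r c) :=
      (hG.connected.parent_spec hpc).1
    rw [ha, Set.mem_singleton_iff] at hc' hp
    exact hG.connected.parent_parent_ne hc hpc (hp.trans hc'.symm)
  · intro hw
    obtain ⟨u, hwu, hu⟩ : ∃ u, G.Adj w u ∧ u ≠ G.parent r w := by
      by_contra! hall
      obtain ⟨u, hwu⟩ := hG.connected.preconnected.exists_adj_of_nontrivial w
      refine hw (G.parent r w) (Set.eq_singleton_iff_unique_mem.mpr ⟨?_, hall⟩)
      exact hall u hwu ▸ hwu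
    rcases hG.adj_iff_parent.mp hwu with ⟨-, h⟩ | ⟨hur, h⟩
    · exact absurd h.symm hu
    · exact ⟨u, hur, h⟩

section Leaves

variable [Fintype V]

open Classical in
noncomputable def leafFinset (G : SimpleGraph V) : Finset V :=
  {v | Nat.card (G.neighborSet v) = 1}

theorem mem_leafFinset {v : V} :
    v ∈ G.leafFinset ↔ Nat.card (G.neighborSet v) = 1 := by
  simp [leafFinset]

theorem card_leafFinset (G : SimpleGraph V) :
    #G.leafFinset = Nat.card {v // Nat.card (G.neighborSet v) = 1} := by
  rw [← Nat.card_eq_finsetCard]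
  exact Nat.card_congr (Equiv.subtypeEquivRight fun _ => mem_leafFinset)

theorem card_isTree_leafFinset_eq_le [Nontrivial V] (L : Finset V) (hr : r ∉ L) :
    Nat.card {T : SimpleGraph V // T.IsTree ∧ T.leafFinset = L} ≤
      Nat.card {f : {v // v ≠ r} → {v // v ∉ L} // Function.Surjective f} := by
  have hrange (T : SimpleGraph V) (hT : T.IsTree ∧ T.leafFinset = L) :
      Set.range (fun v : {v // v ≠ r} => T.parent r v) = {v | v ∉ L} := by
    rw [hT.1.range_parent (by rwa [Ne, ← mem_leafFinset, hT.2])]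
    simp [← hT.2, mem_leafFinset]
  let F (T : {T : SimpleGraph V // T.IsTree ∧ T.leafFinset = L}) :
      {f : {v // v ≠ r} → {v // v ∉ L} // Function.Surjective f} :=
    ⟨fun v => ⟨T.1.parent r v, (hrange T.1 T.2).subset ⟨v, rfl⟩⟩, fun w => by
      obtain ⟨v, hv⟩ := (hrange T.1 T.2).superset w.2
      exact ⟨v, Subtype.ext hv⟩⟩
  refine Nat.card_le_card_of_injective F fun T₁ T₂ h => Subtype.ext ?_
  refine T₁.2.1.ext_of_parent T₂.2.1 (r := r) fun v hv => ?_
  exact congrArg Subtype.val (congrFun (congrArg Subtype.val h) ⟨v, hv⟩)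

theorem card_isTree_card_leafFinset_le [Nontrivial V] {k : ℕ} (hk : k < Fintype.card V) :
    Nat.card {T : SimpleGraph V // T.IsTree ∧ #T.leafFinset = k} ≤
      (Fintype.card V).choose k * ((Fintype.card V - 1).choose (Fintype.card V - k) *
        ((Fintype.card V - k)! * (Fintype.card V - k) ^ (k - 1))) := by
  let F (T : {T : SimpleGraph V // T.IsTree ∧ #T.leafFinset = k}) :
      Σ L : {L : Finset V // #L = k}, {T : SimpleGraph V // T.IsTree ∧ T.leafFinset = L} :=
    ⟨⟨T.1.leafFinset, T.2.2⟩, ⟨T.1, T.2.1, rfl⟩⟩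
  have hF : Function.Injective F := fun T₁ T₂ h => Subtype.ext (congrArg (fun x => x.2.1) h)
  refine (Nat.card_le_card_of_injective F hF).trans ?_
  rw [Nat.card_sigma, ← Fintype.card_finset_len, ← Finset.card_univ, ← smul_eq_mul]
  refine sum_le_card_nsmul _ _ _ fun L _ => ?_
  obtain ⟨r, -, hr⟩ := exists_mem_notMem_of_card_lt_card (s := L.1) (t := univ)
    (by rwa [L.2, Finset.card_univ])
  refine (card_isTree_leafFinset_eq_le L.1 hr).trans ((card_surjective_le).trans_eq ?_)
  classical
  have hcompl : Nat.card {v // v ∉ L.1} = Fintype.card V - k := by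
    rw [Nat.card_eq_fintype_card, Fintype.card_subtype_compl, Fintype.card_coe, L.2]
  rw [hcompl, Nat.card_eq_fintype_card, Fintype.card_subtype_compl, Fintype.card_subtype_eq,
    show Fintype.card V - 1 - (Fintype.card V - k) = k - 1 by omega]

end Leaves

end SimpleGraph

theorem Nat.choose_succ_le_two_pow_mul (N : ℕ) {m : ℕ} (hm : 1 ≤ m) :
    (N + 1).choose m ≤ 2 ^ N * m := by
  obtain rfl | hm := hm.eq_or_lt
  · simpa using Nat.lt_two_pow_self
  · calc (N + 1).choose m ≤ 2 ^ (N + 1) := Nat.choose_le_two_pow _ _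
      _ ≤ 2 ^ N * m := by rw [pow_succ]; gcongr; omega

theorem two_mul_pow_self_le_factorial_mul_exp {k : ℕ} (hk : 1 ≤ k) :
    2 * (k : ℝ) ^ k ≤ k ! * Real.exp 1 ^ k := by
  obtain ⟨j, rfl⟩ : ∃ j, k = j + 1 := ⟨k - 1, by omega⟩
  have hsum := Real.sum_le_exp_of_nonneg (Nat.cast_nonneg (j + 1)) (j + 2)
  rw [sum_range_succ, sum_range_succ] at hsum
  have hrest : 0 ≤ ∑ i ∈ range j, ((j + 1 : ℕ) : ℝ) ^ i / i ! :=
    sum_nonneg fun i _ => by positivity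
  have hterm : ((j + 1 : ℕ) : ℝ) ^ j / j ! = ((j + 1 : ℕ) : ℝ) ^ (j + 1) / (j + 1)! := by
    rw [Nat.factorial_succ, pow_succ, Nat.cast_mul]
    field_simp
  rw [hterm] at hsum
  have h2 : 2 * (((j + 1 : ℕ) : ℝ) ^ (j + 1) / (j + 1)!) ≤ Real.exp 1 ^ (j + 1) := by
    rw [Real.exp_one_pow]
    linarith
  calc 2 * ((j + 1 : ℕ) : ℝ) ^ (j + 1)
      = (j + 1)! * (2 * (((j + 1 : ℕ) : ℝ) ^ (j + 1) / (j + 1)!)) := by field_simp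
    _ ≤ (j + 1)! * Real.exp 1 ^ (j + 1) := by gcongr

theorem numTreesWithLeaves_eq_card (n k : ℕ) :
    numTreesWithLeaves n k =
      Nat.card {T : SimpleGraph (Fin n) // T.IsTree ∧ #T.leafFinset = k} :=
  Nat.card_congr (Equiv.subtypeEquivRight fun T => by rw [SimpleGraph.card_leafFinset])

theorem count_trees_with_k_leaves_upper_bound_general (n k : ℕ) (hk2 : 2 ≤ k)
    (hkn : k ≤ n - 1) :
    (numTreesWithLeaves n k : ℝ)
      ≤ (n.factorial : ℝ) * (Real.exp 1 ^ k / (k : ℝ) ^ k) * 2 ^ (n - 3)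
          * ((n - k : ℕ) : ℝ) ^ k := by
  have : Nontrivial (Fin n) := Fin.nontrivial_iff_two_le.mpr (by omega)
  set m := n - k
  have hcount : numTreesWithLeaves n k ≤ n.choose k * (m ! * (2 ^ (n - 2) * m ^ k)) := by
    rw [numTreesWithLeaves_eq_card]
    refine (SimpleGraph.card_isTree_card_leafFinset_le (by simp; omega)).trans ?_
    rw [Fintype.card_fin]
    gcongr n.choose k * ?_
    have hchoose : (n - 1).choose m ≤ 2 ^ (n - 2) * m := by
      rw [show n - 1 = n - 2 + 1 by omega]
      exact choose_succ_le_two_pow_mul _ (by omega)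
    calc (n - 1).choose m * (m ! * m ^ (k - 1)) ≤ 2 ^ (n - 2) * m * (m ! * m ^ (k - 1)) := by
          gcongr
      _ = m ! * (2 ^ (n - 2) * m ^ k) := by
          rw [show k = k - 1 + 1 by omega, pow_succ, Nat.add_sub_cancel]; ring
  have hfac : (n ! : ℝ) = n.choose k * k ! * m ! := by
    exact_mod_cast (choose_mul_factorial_mul_factorial (by omega : k ≤ n)).symm
  have hexp : 2 ≤ (k ! : ℝ) * (Real.exp 1 ^ k / k ^ k) := by
    rw [← mul_div_assoc, le_div_iff₀ (by positivity)]
    exact two_mul_pow_self_le_factorial_mul_exp (by omega)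
  calc (numTreesWithLeaves n k : ℝ) ≤ n.choose k * (m ! * (2 ^ (n - 2) * m ^ k)) := by
        exact_mod_cast hcount
    _ = n.choose k * m ! * 2 ^ (n - 3) * m ^ k * 2 := by
        rw [show n - 2 = n - 3 + 1 by omega, pow_succ]; ring
    _ ≤ n.choose k * m ! * 2 ^ (n - 3) * m ^ k * (k ! * (Real.exp 1 ^ k / k ^ k)) := by
        gcongr
    _ = _ := by rw [hfac]; ring

/-- For `n ≥ 3` and `2 ≤ k ≤ n − 1`, the number of trees on `Fin n` with exactly `k`
leaves is at most `n! · (e^k / k^k) · 2^{n−3} · (n − k)^k`. -/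
theorem count_trees_with_k_leaves_upper_bound (n k : ℕ) (hn : 3 ≤ n) (hk2 : 2 ≤ k)
    (hkn : k ≤ n - 1) :
    (numTreesWithLeaves n k : ℝ)
      ≤ (n.factorial : ℝ) * (Real.exp 1 ^ k / (k : ℝ) ^ k) * 2 ^ (n - 3)
          * ((n - k : ℕ) : ℝ) ^ k :=
  count_trees_with_k_leaves_upper_bound_general n k hk2 hkn
end

section
/- Let n ≥ 3 be an integer and let α be a real number with e/(1+e) < α < 1 and ⌈α·n⌉ ≤ n − 1, where e is Euler's number. Then the number of trees on Fin n having at least ⌈α·n⌉ leaves is at most (n − ⌈α·n⌉ + 1) · n! · 2^{n−3} · e^{⌈α·n⌉} · ((1−α)/α)^{⌈α·n⌉}. -/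
/-!
Root a tree at one of `k` chosen leaves and record the parent of every vertex; the tree is
recovered from its parent map. A non-root leaf is nobody's parent, and for `n ≥ 3` no two
leaves are adjacent, so each of the other `k - 1` chosen leaves has its parent among the
`n - k` unchosen vertices, and each unchosen vertex has its parent among these or the root.
Hence there are at most `C(n, k) (n - k)^(k - 1) (n - k + 1)^(n - k)` such trees. The bound
follows from `k^k ≤ e^k k!`, `(m + 1)^m ≤ 4^m m!` and `(n - k)/k ≤ (1 - α)/α`, where
`α > e/(1 + e) > 2/3` forces `k ≥ n - k + 2`.
-/

/-- The number of trees on `Fin n` (connected acyclic simple graphs) having at least `k`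
leaves (vertices of degree `1`, i.e. with exactly one neighbor). -/
noncomputable def numTreesWithAtLeastLeaves (n k : ℕ) : ℕ :=
  Nat.card {G : SimpleGraph (Fin n) //
    G.IsTree ∧ k ≤ Nat.card {v : Fin n // Nat.card (G.neighborSet v) = 1}}

open Finset

namespace SimpleGraph

variable {V : Type*} {G : SimpleGraph V}

lemma eq_of_adj_of_card_neighborSet_eq_one {u a b : V} (hu : Nat.card (G.neighborSet u) = 1)
    (ha : G.Adj u a) (hb : G.Adj u b) : a = b :=
  haveI := (Nat.card_eq_one_iff_unique.mp hu).1
  congrArg Subtype.val (Subsingleton.elim (⟨a, ha⟩ : G.neighborSet u) ⟨b, hb⟩)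

lemma Connected.not_adj_of_card_neighborSet_eq_one [Fintype V] (hG : G.Connected)
    (hV : 3 ≤ Fintype.card V) {u v : V} (hu : Nat.card (G.neighborSet u) = 1)
    (hv : Nat.card (G.neighborSet v) = 1) : ¬G.Adj u v := by
  classical
  intro huv
  have hcard : #({u, v} : Finset V) < #(univ : Finset V) :=
    card_le_two.trans_lt (by rw [card_univ]; omega)
  obtain ⟨x, -, hx⟩ := exists_mem_notMem_of_card_lt_card hcard
  -- `{u, v}` is closed under adjacency, so no walk leaves it
  obtain ⟨d, -, hd, hd'⟩ :=
    (hG u x).some.exists_boundary_dart {u, v} (by simp) (by simpa using hx)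
  rcases hd with hd | hd <;> apply hd'
  · simp [eq_of_adj_of_card_neighborSet_eq_one hu (hd ▸ d.adj) huv]
  · simp [eq_of_adj_of_card_neighborSet_eq_one hv (hd ▸ d.adj) huv.symm]

namespace IsTree

variable (hG : G.IsTree)

noncomputable def path (u v : V) : G.Walk u v := (hG.existsUnique_path u v).exists.choose

lemma isPath_path (u v : V) : (hG.path u v).IsPath :=
  (hG.existsUnique_path u v).exists.choose_spec

lemma eq_path {u v : V} {p : G.Walk u v} (hp : p.IsPath) : p = hG.path u v :=
  (hG.existsUnique_path u v).unique hp (hG.isPath_path u v)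

noncomputable def parent (r u : V) : V := (hG.path r u).penultimate

variable (r : V) {u w : V}

@[simp] lemma parent_root : hG.parent r r = r := by
  rw [parent, ← hG.eq_path Walk.IsPath.nil, Walk.penultimate_nil]

lemma adj_parent (hu : u ≠ r) : G.Adj (hG.parent r u) u :=
  Walk.adj_penultimate (Walk.not_nil_of_ne hu.symm)

lemma parent_mem_support_path : hG.parent r u ∈ (hG.path r u).support :=
  Walk.getVert_mem_support _ _

lemma adj_iff_parent_s15 : G.Adj u w ↔ u ≠ w ∧ (hG.parent r u = w ∨ hG.parent r w = u) := by
  constructor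
  · intro huw
    refine ⟨huw.ne, ?_⟩
    by_cases hw : w ∈ (hG.path r u).support
    · exact .inl (hG.isAcyclic.eq_penultimate_of_adj_end (hG.isPath_path r u) huw hw).symm
    · have hu := hG.isAcyclic.mem_support_of_ne_mem_support_of_adj_of_isPath
        (hG.isPath_path r w) (hG.isPath_path r u) huw.symm hw
      exact .inr (hG.isAcyclic.eq_penultimate_of_adj_end (hG.isPath_path r w) huw.symm hu).symm
  · rintro ⟨hne, rfl | rfl⟩
    · have hu : u ≠ r := by rintro rfl; exact hne (hG.parent_root _).symm
      exact (hG.adj_parent r hu).symm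
    · have hw : w ≠ r := by rintro rfl; exact hne (hG.parent_root _)
      exact hG.adj_parent r hw

lemma path_eq_concat_parent (hu : u ≠ r) :
    hG.path r u = (hG.path r (hG.parent r u)).concat (hG.adj_parent r hu) :=
  hG.isAcyclic.path_concat (hG.isPath_path _ _) (hG.isPath_path _ _) _
    (hG.parent_mem_support_path r)

lemma parent_parent_ne (hu : u ≠ r) : hG.parent r (hG.parent r u) ≠ u := by
  by_cases hpu : hG.parent r u = r
  · rw [hpu, parent_root]
    exact hu.symm
  · have hpath := hG.isPath_path r u
    rw [hG.path_eq_concat_parent r hu, Walk.concat_isPath_iff] at hpath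
    intro hpp
    have hmem := hG.parent_mem_support_path r (u := hG.parent r u)
    rw [hpp] at hmem
    exact hpath.2 hmem

lemma parent_ne_of_card_neighborSet_eq_one (hu : u ≠ r)
    (hleaf : Nat.card (G.neighborSet u) = 1) (v : V) : hG.parent r v ≠ u := by
  rintro rfl
  have hv : v ≠ r := by rintro rfl; exact hu (hG.parent_root _)
  exact hG.parent_parent_ne r hv (eq_of_adj_of_card_neighborSet_eq_one hleaf
    (hG.adj_parent r hu).symm (hG.adj_parent r hv))

end IsTree

lemma IsTree.ext_of_parent_eq {G G' : SimpleGraph V} (hG : G.IsTree) (hG' : G'.IsTree) {r : V}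
    (h : hG.parent r = hG'.parent r) : G = G' := by
  ext u w
  rw [hG.adj_iff_parent_s15 r, hG'.adj_iff_parent_s15 r, h]

end SimpleGraph

open SimpleGraph

lemma exists_finset_card_eq_of_le_natCard {V : Type*} [Fintype V] {p : V → Prop} {k : ℕ}
    (hk : k ≤ Nat.card {v // p v}) : ∃ S : Finset V, #S = k ∧ ∀ v ∈ S, p v := by
  classical
  rw [Nat.card_eq_fintype_card, Fintype.card_subtype] at hk
  obtain ⟨S, hSp, hSk⟩ := exists_subset_card_eq hk
  exact ⟨S, hSk, fun v hv => (mem_filter.mp (hSp hv)).2⟩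

section ParentCodes

variable {V : Type*} [Fintype V] [LinearOrder V]

/-- Where the parent of `v` may lie when the chosen leaves `S` are rooted at `r ∈ S`: apart
from the edge at `r`, no edge joins two leaves. -/
def allowedParents (S : Finset V) (r v : V) : Finset V :=
  if v = r then {r} else if v ∈ S then Sᶜ else insert r Sᶜ

def parentCodes (k : ℕ) : Finset (Σ _ : Finset V, V → V) :=
  (univ.powersetCard k).sigma fun S =>
    if hS : S.Nonempty then Fintype.piFinset (allowedParents S (S.min' hS)) else ∅

lemma card_piFinset_allowedParents {S : Finset V} {r : V} (hr : r ∈ S) :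
    #(Fintype.piFinset (allowedParents S r)) = #Sᶜ ^ (#S - 1) * (#Sᶜ + 1) ^ #Sᶜ := by
  rw [Fintype.card_piFinset, ← prod_mul_prod_compl S, ← mul_prod_erase S _ hr]
  have hroot : #(allowedParents S r r) = 1 := by simp [allowedParents]
  have hleaf : ∀ v ∈ S.erase r, #(allowedParents S r v) = #Sᶜ := fun v hv => by
    rw [allowedParents, if_neg (ne_of_mem_erase hv), if_pos (mem_of_mem_erase hv)]
  have hinner : ∀ v ∈ Sᶜ, #(allowedParents S r v) = #Sᶜ + 1 := fun v hv => by
    rw [mem_compl] at hv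
    rw [allowedParents, if_neg (fun h : v = r => hv (h ▸ hr)), if_neg hv,
      card_insert_of_notMem (by simpa using hr)]
  rw [hroot, prod_congr rfl hleaf, prod_congr rfl hinner, prod_const, prod_const,
    card_erase_of_mem hr, one_mul]

lemma card_parentCodes {k : ℕ} (hk : 1 ≤ k) :
    #(parentCodes (V := V) k) = (Fintype.card V).choose k *
      ((Fintype.card V - k) ^ (k - 1) * (Fintype.card V - k + 1) ^ (Fintype.card V - k)) := by
  rw [parentCodes, card_sigma, ← card_univ, ← card_powersetCard, ← smul_eq_mul, ← sum_const]
  refine sum_congr rfl fun S hS => ?_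
  rw [mem_powersetCard_univ] at hS
  have hS' : S.Nonempty := card_pos.mp (by omega)
  rw [dif_pos hS', card_piFinset_allowedParents (S.min'_mem hS'), card_compl, hS, card_univ]

lemma SimpleGraph.IsTree.parent_mem_allowedParents {G : SimpleGraph V} (hG : G.IsTree)
    (hV : 3 ≤ Fintype.card V) {S : Finset V} (hS : ∀ v ∈ S, Nat.card (G.neighborSet v) = 1)
    {r : V} (hr : r ∈ S) (v : V) : hG.parent r v ∈ allowedParents S r v := by
  have hnot_leaf : ∀ u, hG.parent r u ≠ r → hG.parent r u ∉ S := fun u hpr hp =>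
    hG.parent_ne_of_card_neighborSet_eq_one r hpr (hS _ hp) u rfl
  unfold allowedParents
  split_ifs with hvr hvS
  · simp [hvr]
  · rw [mem_compl]
    by_cases hpr : hG.parent r v = r
    · exact absurd (hpr ▸ hG.adj_parent r hvr)
        (hG.connected.not_adj_of_card_neighborSet_eq_one hV (hS r hr) (hS v hvS))
    · exact hnot_leaf v hpr
  · rw [mem_insert, mem_compl]
    exact or_iff_not_imp_left.mpr (hnot_leaf v)

/-- A tree is determined by a `k`-set `S` of its leaves and its parent map towards `min S`. -/
theorem natCard_trees_with_leaves_le_card_parentCodes {k : ℕ} (hk : 1 ≤ k)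
    (hV : 3 ≤ Fintype.card V) :
    Nat.card {G : SimpleGraph V //
        G.IsTree ∧ k ≤ Nat.card {v : V // Nat.card (G.neighborSet v) = 1}}
      ≤ #(parentCodes (V := V) k) := by
  choose S hSk hS using fun G : {G : SimpleGraph V //
      G.IsTree ∧ k ≤ Nat.card {v : V // Nat.card (G.neighborSet v) = 1}} =>
    exists_finset_card_eq_of_le_natCard G.2.2
  have hne G : (S G).Nonempty := card_pos.mp (by rw [hSk G]; omega)
  have hcode G : (⟨S G, G.2.1.parent ((S G).min' (hne G))⟩ : Σ _ : Finset V, V → V)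
      ∈ parentCodes k := by
    rw [parentCodes, mem_sigma, dif_pos (hne G), Fintype.mem_piFinset]
    exact ⟨mem_powersetCard_univ.mpr (hSk G),
      G.2.1.parent_mem_allowedParents hV (hS G) ((S G).min'_mem _)⟩
  let code G : parentCodes (V := V) k := ⟨_, hcode G⟩
  refine (Nat.card_le_card_of_injective code fun G G' h => ?_).trans
    (Nat.card_eq_finsetCard _).le
  obtain ⟨hSS, hpar⟩ := Sigma.mk.inj_iff.mp (Subtype.ext_iff.mp h)
  have hSS : S G = S G' := hSS
  have hroot : (S G).min' (hne G) = (S G').min' (hne G') := by simp only [hSS]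
  have hpar : G.2.1.parent ((S G).min' (hne G)) = G'.2.1.parent ((S G').min' (hne G')) :=
    eq_of_heq hpar
  rw [hroot] at hpar
  exact Subtype.ext (G.2.1.ext_of_parent_eq G'.2.1 hpar)

end ParentCodes

lemma numTreesWithAtLeastLeaves_add_le {k m : ℕ} (hk : 1 ≤ k) (hkm : 3 ≤ k + m) :
    numTreesWithAtLeastLeaves (k + m) k ≤ (k + m).choose k * (m ^ (k - 1) * (m + 1) ^ m) := by
  have h := natCard_trees_with_leaves_le_card_parentCodes (V := Fin (k + m)) hk (by simpa using hkm)
  rwa [card_parentCodes hk, Fintype.card_fin, Nat.add_sub_cancel_left] at h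

lemma pow_le_exp_one_pow_mul_factorial (k : ℕ) :
    (k : ℝ) ^ k ≤ Real.exp 1 ^ k * k.factorial := by
  have h := Real.pow_div_factorial_le_exp (x := k) (Nat.cast_nonneg k) k
  rwa [div_le_iff₀ (by positivity), ← Real.exp_one_pow] at h

lemma succ_pow_le_four_pow_mul_factorial (a : ℕ) :
    ((a : ℝ) + 1) ^ a ≤ 4 ^ a * a.factorial := by
  induction a with
  | zero => simp
  | succ a ih =>
    have hratio : ((a : ℝ) + 2) ^ (a + 1) ≤ Real.exp 1 * ((a : ℝ) + 1) ^ (a + 1) := by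
      have h := Real.one_add_inv_pow_le_exp (n := a + 1)
      calc ((a : ℝ) + 2) ^ (a + 1)
          = (1 + ((a + 1 : ℕ) : ℝ)⁻¹) ^ (a + 1) * ((a : ℝ) + 1) ^ (a + 1) := by
            rw [← mul_pow]; congr 1; push_cast; field_simp; ring
        _ ≤ Real.exp 1 * ((a : ℝ) + 1) ^ (a + 1) := by gcongr
    have he : Real.exp 1 ≤ 4 := by linarith [Real.exp_one_lt_d9]
    calc (((a + 1 : ℕ) : ℝ) + 1) ^ (a + 1) = ((a : ℝ) + 2) ^ (a + 1) := by push_cast; ring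
      _ ≤ Real.exp 1 * ((a : ℝ) + 1) * ((a : ℝ) + 1) ^ a := by
        rw [mul_assoc, ← pow_succ']; exact hratio
      _ ≤ 4 * ((a : ℝ) + 1) * (4 ^ a * a.factorial) := by gcongr
      _ = 4 ^ (a + 1) * (a + 1).factorial := by push_cast [Nat.factorial_succ]; ring

lemma four_pow_mul_pow_le {k m : ℕ} (hm : 1 ≤ m) (hmk : m + 2 ≤ k) :
    4 ^ m * m ^ (k - 1) ≤ (m + 1) * 2 ^ (k + m - 3) * m ^ k := by
  have h4 : 4 ^ m ≤ 2 * 2 ^ (k + m - 3) := by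
    rw [← pow_succ', show 4 ^ m = 2 ^ (2 * m) by rw [pow_mul]; norm_num]
    exact Nat.pow_le_pow_right (by norm_num) (by omega)
  have hmk' : m ^ k = m * m ^ (k - 1) := by rw [← pow_succ']; congr 1; omega
  have h2 : 2 ≤ m * (m + 1) := by nlinarith
  calc 4 ^ m * m ^ (k - 1) ≤ 2 * 2 ^ (k + m - 3) * m ^ (k - 1) := by gcongr
    _ ≤ m * (m + 1) * 2 ^ (k + m - 3) * m ^ (k - 1) := by gcongr
    _ = (m + 1) * 2 ^ (k + m - 3) * m ^ k := by rw [hmk']; ring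

lemma choose_mul_pow_mul_pow_le {k m : ℕ} (hm : 1 ≤ m) (hmk : m + 2 ≤ k) :
    ((k + m).choose k : ℝ) * ((m : ℝ) ^ (k - 1) * ((m : ℝ) + 1) ^ m)
      ≤ ((m : ℝ) + 1) * (k + m).factorial * 2 ^ (k + m - 3) * Real.exp 1 ^ k
          * ((m : ℝ) / k) ^ k := by
  have hchoose : ((k + m).choose k : ℝ) * k.factorial * m.factorial = (k + m).factorial := by
    rw [Nat.choose_symm_add]
    exact_mod_cast Nat.add_choose_mul_factorial_mul_factorial k m
  have hpow : (4 : ℝ) ^ m * (m : ℝ) ^ (k - 1)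
      ≤ ((m : ℝ) + 1) * 2 ^ (k + m - 3) * (m : ℝ) ^ k := by
    exact_mod_cast four_pow_mul_pow_le hm hmk
  have hk : (0 : ℝ) < k := by exact_mod_cast (by omega : 0 < k)
  rw [div_pow, ← mul_div_assoc, le_div_iff₀ (by positivity)]
  calc ((k + m).choose k : ℝ) * ((m : ℝ) ^ (k - 1) * ((m : ℝ) + 1) ^ m) * (k : ℝ) ^ k
      ≤ ((k + m).choose k : ℝ) * ((m : ℝ) ^ (k - 1) * (4 ^ m * m.factorial))
          * (Real.exp 1 ^ k * k.factorial) := by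
        gcongr
        exacts [succ_pow_le_four_pow_mul_factorial m, pow_le_exp_one_pow_mul_factorial k]
    _ = ((k + m).choose k * k.factorial * m.factorial) * Real.exp 1 ^ k
          * (4 ^ m * (m : ℝ) ^ (k - 1)) := by ring
    _ ≤ (k + m).factorial * Real.exp 1 ^ k
          * (((m : ℝ) + 1) * 2 ^ (k + m - 3) * (m : ℝ) ^ k) := by
        rw [hchoose]; gcongr
    _ = _ := by ring

lemma add_two_le_two_mul_ceil {n : ℕ} {α : ℝ} (hn : 3 ≤ n) (hα : 2 / 3 < α) :
    n + 2 ≤ 2 * ⌈α * n⌉₊ := by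
  have hceil : α * n ≤ ⌈α * n⌉₊ := Nat.le_ceil _
  have hn' : (3 : ℝ) ≤ n := by exact_mod_cast hn
  have h : (n : ℝ) + 1 < 2 * ⌈α * n⌉₊ := by
    nlinarith [mul_lt_mul_of_pos_right hα (by linarith : (0 : ℝ) < n)]
  exact_mod_cast h

lemma sub_ceil_div_ceil_le {n : ℕ} {α : ℝ} (hα : 0 < α) (hpos : 0 < ⌈α * n⌉₊)
    (hle : ⌈α * n⌉₊ ≤ n) : ((n - ⌈α * n⌉₊ : ℕ) : ℝ) / ⌈α * n⌉₊ ≤ (1 - α) / α := by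
  rw [div_le_div_iff₀ (by exact_mod_cast hpos) hα, Nat.cast_sub hle]
  nlinarith [Nat.le_ceil (α * n)]

theorem count_trees_with_many_leaves_upper_bound_general (n : ℕ) (hn : 3 ≤ n) (α : ℝ)
    (hα₁ : Real.exp 1 / (1 + Real.exp 1) < α)
    (hceil : ⌈α * n⌉₊ ≤ n - 1) :
    (numTreesWithAtLeastLeaves n ⌈α * n⌉₊ : ℝ)
      ≤ ((n - ⌈α * n⌉₊ + 1 : ℕ) : ℝ) * (n.factorial : ℝ) * 2 ^ (n - 3)
          * Real.exp 1 ^ ⌈α * n⌉₊ * ((1 - α) / α) ^ ⌈α * n⌉₊ := by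
  have hα : 2 / 3 < α := by
    rw [div_lt_iff₀ (by positivity)] at hα₁
    nlinarith [Real.exp_one_gt_d9]
  have hk := add_two_le_two_mul_ceil hn hα
  have hratio := sub_ceil_div_ceil_le (n := n) (by linarith) (by omega) (by omega)
  generalize ⌈α * n⌉₊ = k at *
  obtain ⟨m, rfl⟩ : ∃ m, n = k + m := ⟨n - k, by omega⟩
  rw [Nat.add_sub_cancel_left] at hratio ⊢
  calc (numTreesWithAtLeastLeaves (k + m) k : ℝ)
      ≤ ((k + m).choose k * (m ^ (k - 1) * (m + 1) ^ m) : ℕ) := by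
        exact_mod_cast numTreesWithAtLeastLeaves_add_le (by omega) hn
    _ ≤ ((m : ℝ) + 1) * (k + m).factorial * 2 ^ (k + m - 3) * Real.exp 1 ^ k
          * ((m : ℝ) / k) ^ k := by
        push_cast
        exact choose_mul_pow_mul_pow_le (by omega) (by omega)
    _ ≤ _ := by push_cast; gcongr

/-- For `n ≥ 3` and real `α` with `e/(1+e) < α < 1` and `⌈αn⌉ ≤ n − 1`, the number of trees
on `Fin n` with at least `⌈αn⌉` leaves is at most
`(n − ⌈αn⌉ + 1) · n! · 2^{n−3} · e^{⌈αn⌉} · ((1−α)/α)^{⌈αn⌉}`. -/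
theorem count_trees_with_many_leaves_upper_bound (n : ℕ) (hn : 3 ≤ n) (α : ℝ)
    (hα₁ : Real.exp 1 / (1 + Real.exp 1) < α) (hα₂ : α < 1)
    (hceil : ⌈α * n⌉₊ ≤ n - 1) :
    (numTreesWithAtLeastLeaves n ⌈α * n⌉₊ : ℝ)
      ≤ ((n - ⌈α * n⌉₊ + 1 : ℕ) : ℝ) * (n.factorial : ℝ) * 2 ^ (n - 3)
          * Real.exp 1 ^ ⌈α * n⌉₊ * ((1 - α) / α) ^ ⌈α * n⌉₊ :=
  count_trees_with_many_leaves_upper_bound_general n hn α hα₁ hceil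
end
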